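/- Let A be a real symmetric positive semidefinite n×n matrix and let p ≥ 1 be an integer. On a probability space, let w_1, w_2, … be an infinite sequence of independent random vectors in ℝ^n whose scalar entries are i.i.d. standard normal, and let X_M = ((1/M) Σ_{j=1}^M w_jᵀ A^p w_j)^{1/p}. Then X_M converges to ‖A‖_p almost surely as M → ∞. -/

import Mathlib

open MeasureTheory ProbabilityTheory Matrix Filter Topology

open MeasureTheory ProbabilityTheory Real Filter Set Topology
open scoped ENNReal NNReal

lemma integrable_sq_exp : Integrable (fun x : ℝ => x ^ 2 * Real.exp (-(1/2:ℝ) * x ^ 2)) := by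
  have h := integrable_rpow_mul_exp_neg_mul_sq (b := (1/2:ℝ)) one_half_pos (s := 2) (by norm_num)
  refine h.congr (Filter.Eventually.of_forall fun x => ?_)
  norm_num [show ((2:ℝ)) = ((2:ℕ):ℝ) by norm_num, Real.rpow_natCast]

lemma integral_exp_half : ∫ x : ℝ, Real.exp (-(1/2:ℝ) * x ^ 2) = Real.sqrt (2 * π) := by
  rw [integral_gaussian]
  rw [show π / (1/2:ℝ) = 2 * π by ring]

lemma integral_sq_exp : ∫ x : ℝ, x ^ 2 * Real.exp (-(1/2:ℝ) * x ^ 2) = Real.sqrt (2 * π) := by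
  have hexp_int : Integrable (fun x : ℝ => Real.exp (-(1/2:ℝ) * x ^ 2)) :=
    integrable_exp_neg_mul_sq one_half_pos
  have hsq_int := integrable_sq_exp
  have hderiv : ∀ x ∈ Set.Ioi (0:ℝ), HasDerivAt (fun y : ℝ => -y * Real.exp (-(1/2:ℝ) * y ^ 2))
      (x ^ 2 * Real.exp (-(1/2:ℝ) * x ^ 2) - Real.exp (-(1/2:ℝ) * x ^ 2)) x := by
    intro x _
    have h1 : HasDerivAt (fun y : ℝ => -(1/2:ℝ) * y ^ 2) (-(1/2:ℝ) * (2 * x ^ 1)) x :=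
      (hasDerivAt_pow 2 x).const_mul _
    have h3 := ((hasDerivAt_id x).neg).mul h1.exp
    have h4 : HasDerivAt (fun y : ℝ => -y * Real.exp (-(1/2:ℝ) * y ^ 2))
        (-1 * Real.exp (-(1/2:ℝ) * x ^ 2) + -x * (Real.exp (-(1/2:ℝ) * x ^ 2) * (-(1/2:ℝ) * (2 * x ^ 1)))) x := h3
    convert h4 using 1
    ring
  have htend : Tendsto (fun y : ℝ => -y * Real.exp (-(1/2:ℝ) * y ^ 2)) atTop (𝓝 0) := by
    have ho := rpow_mul_exp_neg_mul_sq_isLittleO_exp_neg (b := (1/2:ℝ)) one_half_pos 1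
    have ho2 : (fun x : ℝ => x ^ (1:ℝ) * Real.exp (-(1/2:ℝ) * x ^ 2)) =
        fun y : ℝ => y * Real.exp (-(1/2:ℝ) * y ^ 2) := by
      funext x; rw [Real.rpow_one]
    rw [ho2] at ho
    have h0 : Tendsto (fun x : ℝ => Real.exp (-(1/2:ℝ) * x)) atTop (𝓝 0) := by
      have := Real.tendsto_exp_neg_atTop_nhds_zero.comp
        (tendsto_id.const_mul_atTop (by norm_num : (0:ℝ) < 1/2))
      refine this.congr fun x => ?_
      simp [Function.comp, neg_mul]
    have := ho.trans_tendsto h0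
    simpa [neg_mul] using this.neg
  have hcont : ContinuousWithinAt (fun y : ℝ => -y * Real.exp (-(1/2:ℝ) * y ^ 2)) (Set.Ici 0) 0 :=
    Continuous.continuousWithinAt (by fun_prop)
  have hint' : IntegrableOn (fun x : ℝ =>
      x ^ 2 * Real.exp (-(1/2:ℝ) * x ^ 2) - Real.exp (-(1/2:ℝ) * x ^ 2)) (Set.Ioi 0) :=
    (hsq_int.sub hexp_int).integrableOn
  have key := integral_Ioi_of_hasDerivAt_of_tendsto hcont hderiv hint' htend
  simp only [neg_zero, zero_mul, sub_zero] at key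
  have hsub := integral_sub (hsq_int.integrableOn (s := Set.Ioi 0)) (hexp_int.integrableOn (s := Set.Ioi 0))
  rw [hsub] at key
  have hIoi : ∫ x in Set.Ioi (0:ℝ), x ^ 2 * Real.exp (-(1/2:ℝ) * x ^ 2)
      = ∫ x in Set.Ioi (0:ℝ), Real.exp (-(1/2:ℝ) * x ^ 2) := by linarith
  have e1 : ∫ x : ℝ, x ^ 2 * Real.exp (-(1/2:ℝ) * x ^ 2)
      = 2 * ∫ x in Set.Ioi (0:ℝ), x ^ 2 * Real.exp (-(1/2:ℝ) * x ^ 2) := by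
    rw [← integral_comp_abs (f := fun x : ℝ => x ^ 2 * Real.exp (-(1/2:ℝ) * x ^ 2))]
    simp only [sq_abs]
  have e2 : ∫ x : ℝ, Real.exp (-(1/2:ℝ) * x ^ 2)
      = 2 * ∫ x in Set.Ioi (0:ℝ), Real.exp (-(1/2:ℝ) * x ^ 2) := by
    rw [← integral_comp_abs (f := fun x : ℝ => Real.exp (-(1/2:ℝ) * x ^ 2))]
    simp only [sq_abs]
  rw [e1, hIoi, ← e2, integral_exp_half]

lemma integral_id_exp : ∫ x : ℝ, x * Real.exp (-(1/2:ℝ) * x ^ 2) = 0 := by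
  have hmp : MeasurePreserving (fun x : ℝ => -x) volume volume :=
    ⟨measurable_neg, Measure.map_neg_eq_self _⟩
  have h := hmp.integral_comp (Homeomorph.neg ℝ).isClosedEmbedding.measurableEmbedding
    (fun x : ℝ => x * Real.exp (-(1/2:ℝ) * x ^ 2))
  have h2 : ∫ x : ℝ, -(x * Real.exp (-(1/2:ℝ) * x ^ 2)) = ∫ x : ℝ, x * Real.exp (-(1/2:ℝ) * x ^ 2) := by
    rw [← h]
    congr 1
    funext x
    rw [neg_sq]
    ring
  rw [integral_neg] at h2
  linarith

lemma gaussianReal_eq : (gaussianReal 0 1 : Measure ℝ)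
    = volume.withDensity (fun x => ENNReal.ofReal (gaussianPDFReal 0 1 x)) := by
  rw [gaussianReal_of_var_ne_zero 0 one_ne_zero]
  rfl

lemma pdf01 (x : ℝ) : gaussianPDFReal 0 1 x
    = (Real.sqrt (2 * π))⁻¹ * Real.exp (-(1/2:ℝ) * x ^ 2) := by
  rw [gaussianPDFReal]
  norm_num
  exact Or.inl (by ring)

lemma integral_gaussianReal_fun (g : ℝ → ℝ) :
    ∫ x, g x ∂(gaussianReal 0 1) = ∫ x, gaussianPDFReal 0 1 x * g x := by
  rw [gaussianReal_eq]
  have h : (fun x => ENNReal.ofReal (gaussianPDFReal 0 1 x))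
      = fun x => ((gaussianPDFReal 0 1 x).toNNReal : ℝ≥0∞) := rfl
  rw [h, integral_withDensity_eq_integral_smul ((measurable_gaussianPDFReal 0 1).real_toNNReal) g]
  refine integral_congr_ae (Filter.Eventually.of_forall fun x => ?_)
  simp [NNReal.smul_def, Real.coe_toNNReal _ (gaussianPDFReal_nonneg 0 1 x)]

lemma integrable_gaussianReal_iff (g : ℝ → ℝ) :
    Integrable g (gaussianReal 0 1) ↔ Integrable (fun x => g x * gaussianPDFReal 0 1 x) volume := by
  rw [gaussianReal_eq, integrable_withDensity_iff (measurable_gaussianPDFReal 0 1).ennreal_ofReal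
    (ae_of_all _ fun x => ENNReal.ofReal_lt_top)]
  refine integrable_congr (ae_of_all _ fun x => ?_)
  simp only [ENNReal.toReal_ofReal (gaussianPDFReal_nonneg 0 1 x)]

lemma sqrt_two_pi_pos : (0:ℝ) < Real.sqrt (2 * π) := Real.sqrt_pos.mpr (by positivity)

lemma integrable_sq_gaussian : Integrable (fun x : ℝ => x ^ 2) (gaussianReal 0 1) := by
  rw [integrable_gaussianReal_iff]
  refine (integrable_sq_exp.const_mul ((Real.sqrt (2 * π))⁻¹)).congr
    (Filter.Eventually.of_forall fun x => ?_)
  simp only [pdf01]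
  ring

lemma integrable_id_gaussian : Integrable (fun x : ℝ => x) (gaussianReal 0 1) := by
  rw [integrable_gaussianReal_iff]
  refine (((integrable_mul_exp_neg_mul_sq (b := (1/2:ℝ)) one_half_pos).const_mul
    ((Real.sqrt (2 * π))⁻¹))).congr (Filter.Eventually.of_forall fun x => ?_)
  simp only [pdf01]
  ring

lemma integral_sq_gaussian : ∫ x, x ^ 2 ∂(gaussianReal 0 1) = 1 := by
  rw [integral_gaussianReal_fun]
  have h : (fun x : ℝ => gaussianPDFReal 0 1 x * x ^ 2)
      = fun x => (Real.sqrt (2 * π))⁻¹ * (x ^ 2 * Real.exp (-(1/2:ℝ) * x ^ 2)) := by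
    funext x
    simp only [pdf01]
    ring
  rw [h, integral_const_mul, integral_sq_exp, inv_mul_cancel₀ (ne_of_gt sqrt_two_pi_pos)]

lemma integral_id_gaussian : ∫ x, x ∂(gaussianReal 0 1) = 0 := by
  rw [integral_gaussianReal_fun]
  have h : (fun x : ℝ => gaussianPDFReal 0 1 x * x)
      = fun x => (Real.sqrt (2 * π))⁻¹ * (x * Real.exp (-(1/2:ℝ) * x ^ 2)) := by
    funext x
    simp only [pdf01]
    ring
  rw [h, integral_const_mul, integral_id_exp, mul_zero]

/-- For an SPSD matrix `A`, an integer `p ≥ 1`, and an infinite sequence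
of independent random vectors with i.i.d. standard normal entries, the Monte Carlo
estimator `X_M = ((1/M) ∑_{j=1}^M w_jᵀ A^p w_j)^{1/p}` converges almost surely to
`‖A‖_p = (tr(A^p))^{1/p}` as `M → ∞`. -/
theorem schatten_estimator_tendsto_ae
    {Ω : Type*} [MeasureSpace Ω] [IsProbabilityMeasure (ℙ : Measure Ω)]
    {n : ℕ} (hn : 1 ≤ n)
    (A : Matrix (Fin n) (Fin n) ℝ) (hA : A.PosSemidef)
    (p : ℕ) (hp : 1 ≤ p)
    (w : ℕ → Ω → Fin n → ℝ)
    (hmeas : ∀ ji : ℕ × Fin n, Measurable fun ω => w ji.1 ω ji.2)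
    (hindep : iIndepFun
      (fun ji : ℕ × Fin n => fun ω => w ji.1 ω ji.2) ℙ)
    (hlaw : ∀ ji : ℕ × Fin n,
      Measure.map (fun ω => w ji.1 ω ji.2) ℙ = gaussianReal 0 1) :
    ∀ᵐ ω ∂ℙ, Tendsto
      (fun M : ℕ =>
        ((1 / (M : ℝ)) * ∑ j ∈ Finset.range M, w j ω ⬝ᵥ (A ^ p).mulVec (w j ω)) ^ (1 / (p : ℝ)))
      atTop (𝓝 ((Matrix.trace (A ^ p)) ^ (1 / (p : ℝ)))) := by

  classical
  set B := A ^ p with hB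
  have hq : Measurable fun v : Fin n → ℝ => v ⬝ᵥ B.mulVec v := by
    simp only [dotProduct, Matrix.mulVec]
    exact Finset.measurable_sum _ fun i _ => (measurable_pi_apply i).mul
      (Finset.measurable_sum _ fun k _ => measurable_const.mul (measurable_pi_apply k))
  set Y : ℕ → Ω → ℝ := fun j ω => w j ω ⬝ᵥ B.mulVec (w j ω) with hYdef
  have hWmeas : ∀ j, Measurable (w j) := fun j => measurable_pi_lambda _ fun i => hmeas (j, i)
  have hYmeas : ∀ j, Measurable (Y j) := fun j => hq.comp (hWmeas j)
  -- joint law of each vector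
  have hWlaw : ∀ j, Measure.map (w j) ℙ = Measure.pi fun _ : Fin n => gaussianReal 0 1 := by
    intro j
    refine (Measure.pi_eq fun s hs => ?_).symm
    rw [Measure.map_apply (hWmeas j) (MeasurableSet.univ_pi hs)]
    have hpre : w j ⁻¹' Set.pi Set.univ s
        = ⋂ x ∈ Finset.image (fun i : Fin n => (j, i)) Finset.univ,
          (fun ω => w x.1 ω x.2) ⁻¹' s x.2 := by
      ext ω
      simp [Set.mem_pi]
    rw [hpre, hindep.measure_inter_preimage_eq_mul (sets := fun x : ℕ × Fin n => s x.2) _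
      (fun x _ => hs x.2)]
    rw [Finset.prod_image (fun a _ b _ h => by simpa using h)]
    refine Finset.prod_congr rfl fun i _ => ?_
    rw [← Measure.map_apply (hmeas (j, i)) (hs i), hlaw (j, i)]
  -- identically distributed
  have hWident : ∀ j, IdentDistrib (w j) (w 0) ℙ ℙ := fun j =>
    ⟨(hWmeas j).aemeasurable, (hWmeas 0).aemeasurable, (hWlaw j).trans (hWlaw 0).symm⟩
  have hident : ∀ j, IdentDistrib (Y j) (Y 0) ℙ ℙ := fun j => (hWident j).comp hq
  -- pairwise independent
  have hpair : Pairwise (Function.onFun (ProbabilityTheory.IndepFun · · ℙ) Y) := by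
    intro j k hjk
    have hdisj : Disjoint (Finset.image (fun i : Fin n => (j, i)) Finset.univ)
        (Finset.image (fun i : Fin n => (k, i)) Finset.univ) := by
      simp only [Finset.disjoint_left, Finset.mem_image]
      rintro x ⟨a, -, rfl⟩ ⟨b, -, hb⟩
      have hfst := congrArg Prod.fst hb
      simp only [Prod.fst] at hfst
      exact hjk hfst.symm
    have h := hindep.indepFun_finset _ _ hdisj hmeas
    let ψ : (l : ℕ) →
        ((Finset.image (fun i : Fin n => (l, i)) Finset.univ : Finset (ℕ × Fin n)) → ℝ) → ℝ :=
      fun l v => (fun i : Fin n => v ⟨(l, i), Finset.mem_image_of_mem _ (Finset.mem_univ i)⟩) ⬝ᵥ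
        B.mulVec fun i : Fin n => v ⟨(l, i), Finset.mem_image_of_mem _ (Finset.mem_univ i)⟩
    have hψ : ∀ l, Measurable (ψ l) := fun l =>
      hq.comp (measurable_pi_lambda _ fun i => measurable_pi_apply _)
    exact h.comp (hψ j) (hψ k)
  -- coordinate moments
  have hmap_int : ∀ (g : ℝ → ℝ), Measurable g → Integrable g (gaussianReal 0 1) →
      ∀ j i, Integrable (fun ω => g (w j ω i)) ℙ := by
    intro g hg hgi j i
    have h := integrable_map_measure (μ := ℙ) (f := fun ω => w j ω i) (g := g)
      hg.aestronglyMeasurable (hmeas (j, i)).aemeasurable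
    rw [hlaw (j, i)] at h
    exact h.mp hgi
  have hmap_val : ∀ (g : ℝ → ℝ), Measurable g → ∀ j i,
      ∫ ω, g (w j ω i) ∂ℙ = ∫ x, g x ∂(gaussianReal 0 1) := by
    intro g hg j i
    rw [← hlaw (j, i), integral_map (hmeas (j, i)).aemeasurable hg.aestronglyMeasurable]
  have hvi : ∀ i : Fin n, ∫ ω, w 0 ω i ∂ℙ = 0 := by
    intro i
    have h := hmap_val (fun x => x) measurable_id 0 i
    rw [integral_id_gaussian] at h
    exact h
  -- expansion of the quadratic form
  have hYeq : ∀ j ω, Y j ω = ∑ i : Fin n, ∑ k : Fin n, B i k * (w j ω i * w j ω k) := by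
    intro j ω
    simp only [hYdef, dotProduct, Matrix.mulVec, Finset.mul_sum]
    exact Finset.sum_congr rfl fun i _ => Finset.sum_congr rfl fun k _ => by ring
  have hterm_int : ∀ i k : Fin n, Integrable (fun ω => w 0 ω i * w 0 ω k) ℙ := by
    intro i k
    rcases eq_or_ne i k with rfl | hik
    · have h := hmap_int (fun x => x ^ 2) (measurable_id.pow_const 2) integrable_sq_gaussian 0 i
      exact h.congr (Filter.Eventually.of_forall fun ω => pow_two (w 0 ω i))
    · have hind := hindep.indepFun (show ((0:ℕ), i) ≠ ((0:ℕ), k) by simpa using hik)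
      exact hind.integrable_mul (hmap_int (fun x => x) measurable_id integrable_id_gaussian 0 i)
        (hmap_int (fun x => x) measurable_id integrable_id_gaussian 0 k)
  have hterm_val : ∀ i k : Fin n, ∫ ω, w 0 ω i * w 0 ω k ∂ℙ = if i = k then 1 else 0 := by
    intro i k
    rcases eq_or_ne i k with rfl | hik
    · simp only [if_pos rfl]
      have h := hmap_val (fun x => x ^ 2) (measurable_id.pow_const 2) 0 i
      rw [integral_sq_gaussian] at h
      rw [show (fun ω => w 0 ω i * w 0 ω i) = fun ω => (w 0 ω i) ^ 2 by funext ω; rw [sq]]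
      exact h
    · simp only [if_neg hik]
      have hind := hindep.indepFun (show ((0:ℕ), i) ≠ ((0:ℕ), k) by simpa using hik)
      have h := hind.integral_mul_eq_mul_integral
        (hmap_int (fun x => x) measurable_id integrable_id_gaussian 0 i).aestronglyMeasurable
        (hmap_int (fun x => x) measurable_id integrable_id_gaussian 0 k).aestronglyMeasurable
      calc ∫ ω, w 0 ω i * w 0 ω k ∂ℙ
          = (∫ ω, w 0 ω i ∂ℙ) * ∫ ω, w 0 ω k ∂ℙ := h
        _ = 0 := by rw [hvi i, hvi k, mul_zero]
  -- integrability and expectation of Y 0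
  have hY0eq : Y 0 = fun ω => ∑ i : Fin n, ∑ k : Fin n, B i k * (w 0 ω i * w 0 ω k) :=
    funext fun ω => hYeq 0 ω
  have hint : Integrable (Y 0) ℙ := by
    rw [hY0eq]
    exact integrable_finset_sum _ fun i _ => integrable_finset_sum _ fun k _ =>
      (hterm_int i k).const_mul _
  have hexp : ∫ ω, Y 0 ω ∂ℙ = B.trace := by
    rw [hY0eq, integral_finset_sum _ fun i _ => integrable_finset_sum _ fun k _ =>
      (hterm_int i k).const_mul (B i k)]
    have hrow : ∀ i : Fin n, ∫ ω, ∑ k : Fin n, B i k * (w 0 ω i * w 0 ω k) ∂ℙ = B i i := by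
      intro i
      rw [integral_finset_sum _ fun k _ => (hterm_int i k).const_mul _]
      have hcell : ∀ k : Fin n, ∫ ω, B i k * (w 0 ω i * w 0 ω k) ∂ℙ
          = if i = k then B i i else 0 := by
        intro k
        rw [integral_const_mul, hterm_val i k]
        split_ifs with h
        · subst h; ring
        · ring
      rw [Finset.sum_congr rfl fun k _ => hcell k]
      simp
    rw [Finset.sum_congr rfl fun i _ => hrow i]
    simp [Matrix.trace, Matrix.diag]
  -- strong law of large numbers
  have hslln := strong_law_ae_real Y hint hpair hident
  rw [hexp] at hslln
  filter_upwards [hslln] with ω hω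
  have h2 : Tendsto (fun M : ℕ => (1 / (M:ℝ)) * ∑ j ∈ Finset.range M, Y j ω) atTop
      (𝓝 B.trace) := by
    refine hω.congr fun M => ?_
    rw [one_div, div_eq_inv_mul]
  exact h2.rpow_const (Or.inr (by positivity))
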